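/- Let x_i = g^{2^i} in ℓ¹(ℤ) where g = (f₁+f₋₁)/2 and powers are convolution powers. Then for all i > j and every z ∈ ℓ¹(ℤ) with ‖z‖₁ ≤ 1, ‖x_i * z − x_j‖₁ ≥ 1/4; while for i ≤ j there exists z with ‖z‖₁ ≤ 1 and x_i * z = x_j. Hence the formula φ(x,y) = inf_{‖z‖≤1} ‖xz − y‖ orders the sequence (x_i), witnessing the order property (instability) of the Banach algebra ℓ¹(ℤ). -/

import Mathlib

/-!
Evaluation at a point `w` of the unit circle, `z ↦ Σ z(n) wⁿ`, is multiplicative for convolution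
and bounded by the ℓ¹ norm. At `w = e^{it}` it sends `g` to `cos t`, hence `x_k` to `(cos t)^{2^k}`.
Choosing `t` with `(cos t)^{2^j} = 1/2`, for `i > j` and `‖z‖₁ ≤ 1` the value of `x_i * z` at
`e^{it}` has modulus at most `(cos t)^{2^{j+1}} = 1/4`, while that of `x_j` is `1/2`; so `x_i * z`
stays at ℓ¹ distance `≥ 1/4` from `x_j`.
For `i ≤ j` the quotient `x_j / x_i = g^{2^j - 2^i}` has ℓ¹ norm at most `‖g‖₁^{2^j - 2^i} = 1`.
-/

/-- The element `g = (f₁ + f₋₁)/2` of `ℓ¹(ℤ)`, realized in the convolution algebra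
`AddMonoidAlgebra ℂ ℤ` (its convolution powers are finitely supported). -/
noncomputable def ellOneG : AddMonoidAlgebra ℂ ℤ :=
  (1 / 2 : ℂ) • (AddMonoidAlgebra.single (1 : ℤ) (1 : ℂ) +
    AddMonoidAlgebra.single (-1 : ℤ) (1 : ℂ))

/-- Convolution of a finitely supported `x` with an arbitrary `z ∈ ℓ¹(ℤ)`:
`(x * z)(n) = Σ_m x(m) z(n − m)`. -/
noncomputable def ellOneConv (x : AddMonoidAlgebra ℂ ℤ) (z : ℤ → ℂ) : ℤ → ℂ :=
  fun n => x.coeff.sum fun m c => c * z (n - m)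

lemma tsum_comp_sub_int {α : Type*} [AddCommMonoid α] [TopologicalSpace α] (f : ℤ → α) (m : ℤ) :
    ∑' n, f (n - m) = ∑' n, f n :=
  (Equiv.subRight m).tsum_eq f

section Convolution

variable (x y : AddMonoidAlgebra ℂ ℤ) {z : ℤ → ℂ}

lemma ellOneConv_apply (n : ℤ) :
    ellOneConv x z n = ∑ m ∈ x.coeff.support, x.coeff m * z (n - m) := rfl

lemma ellOneConv_coeff : ellOneConv x y.coeff = (x * y).coeff := by
  funext n
  simp only [ellOneConv, AddMonoidAlgebra.coeff_mul_apply_left, neg_add_eq_sub]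

lemma summable_norm_coeff : Summable fun n => ‖x.coeff n‖ :=
  summable_of_ne_finset_zero (s := x.coeff.support) fun n hn => by
    simp [Finsupp.notMem_support_iff.1 hn]

lemma tsum_norm_coeff : ∑' n, ‖x.coeff n‖ = ∑ m ∈ x.coeff.support, ‖x.coeff m‖ :=
  tsum_eq_sum fun n hn => by simp [Finsupp.notMem_support_iff.1 hn]

lemma norm_ellOneConv_le (n : ℤ) :
    ‖ellOneConv x z n‖ ≤ ∑ m ∈ x.coeff.support, ‖x.coeff m‖ * ‖z (n - m)‖ :=
  (norm_sum_le _ _).trans_eq (by simp only [norm_mul])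

variable {x}

lemma summable_norm_comp_sub (hz : Summable fun n => ‖z n‖) (m : ℤ) :
    Summable fun n => ‖z (n - m)‖ :=
  hz.comp_injective (Equiv.subRight m).injective

lemma summable_ellOneConv_majorant (hz : Summable fun n => ‖z n‖) :
    Summable fun n => ∑ m ∈ x.coeff.support, ‖x.coeff m‖ * ‖z (n - m)‖ :=
  summable_sum fun m _ => (summable_norm_comp_sub hz m).mul_left _

lemma summable_norm_ellOneConv (hz : Summable fun n => ‖z n‖) :
    Summable fun n => ‖ellOneConv x z n‖ :=
  (summable_ellOneConv_majorant hz).of_nonneg_of_le (fun _ => norm_nonneg _)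
    (norm_ellOneConv_le x)

lemma tsum_norm_ellOneConv_le (hz : Summable fun n => ‖z n‖) :
    ∑' n, ‖ellOneConv x z n‖ ≤ (∑' n, ‖x.coeff n‖) * ∑' n, ‖z n‖ :=
  calc ∑' n, ‖ellOneConv x z n‖
      ≤ ∑' n, ∑ m ∈ x.coeff.support, ‖x.coeff m‖ * ‖z (n - m)‖ :=
        (summable_norm_ellOneConv hz).tsum_le_tsum (norm_ellOneConv_le x)
          (summable_ellOneConv_majorant hz)
    _ = ∑ m ∈ x.coeff.support, ‖x.coeff m‖ * ∑' n, ‖z n‖ := by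
        rw [Summable.tsum_finsetSum fun m _ => (summable_norm_comp_sub hz m).mul_left _]
        simp only [tsum_mul_left, tsum_comp_sub_int fun n => ‖z n‖]
    _ = (∑' n, ‖x.coeff n‖) * ∑' n, ‖z n‖ := by rw [← Finset.sum_mul, tsum_norm_coeff]

lemma tsum_norm_coeff_pow_le_one (hx : ∑' n, ‖x.coeff n‖ ≤ 1) (k : ℕ) :
    ∑' n, ‖(x ^ k).coeff n‖ ≤ 1 := by
  induction k with
  | zero =>
    rw [pow_zero, AddMonoidAlgebra.one_def, AddMonoidAlgebra.coeff_single,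
      tsum_eq_single 0 fun n hn => by simp [hn]]
    simp
  | succ k ih =>
    rw [pow_succ', ← ellOneConv_coeff]
    exact (tsum_norm_ellOneConv_le (summable_norm_coeff _)).trans
      (mul_le_one₀ hx (tsum_nonneg fun _ => norm_nonneg _) ih)

end Convolution

noncomputable def fourierAt (w : ℂ) (z : ℤ → ℂ) : ℂ := ∑' n, z n * w ^ n

lemma fourierAt_coeff (w : ℂ) (x : AddMonoidAlgebra ℂ ℤ) :
    fourierAt w x.coeff = ∑ m ∈ x.coeff.support, x.coeff m * w ^ m :=
  tsum_eq_sum fun n hn => by simp [Finsupp.notMem_support_iff.1 hn]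

section UnitCircle

variable {w : ℂ} (hw : ‖w‖ = 1) {y z : ℤ → ℂ}
include hw

lemma norm_mul_zpow_of_norm_eq_one (c : ℂ) (n : ℤ) : ‖c * w ^ n‖ = ‖c‖ := by
  rw [norm_mul, norm_zpow, hw, one_zpow, mul_one]

lemma summable_mul_zpow (hz : Summable fun n => ‖z n‖) : Summable fun n => z n * w ^ n :=
  .of_norm <| hz.congr fun n => (norm_mul_zpow_of_norm_eq_one hw _ n).symm

lemma norm_fourierAt_le (hz : Summable fun n => ‖z n‖) : ‖fourierAt w z‖ ≤ ∑' n, ‖z n‖ :=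
  (norm_tsum_le_tsum_norm (hz.congr fun n => (norm_mul_zpow_of_norm_eq_one hw _ n).symm)).trans_eq
    (tsum_congr fun n => norm_mul_zpow_of_norm_eq_one hw _ n)

lemma fourierAt_sub (hz : Summable fun n => ‖z n‖) (hy : Summable fun n => ‖y n‖) :
    fourierAt w (z - y) = fourierAt w z - fourierAt w y := by
  simp only [fourierAt, Pi.sub_apply, sub_mul]
  exact (summable_mul_zpow hw hz).tsum_sub (summable_mul_zpow hw hy)

lemma fourierAt_ellOneConv (x : AddMonoidAlgebra ℂ ℤ) (hz : Summable fun n => ‖z n‖) :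
    fourierAt w (ellOneConv x z) = fourierAt w x.coeff * fourierAt w z := by
  have hw0 : w ≠ 0 := norm_ne_zero_iff.1 (hw ▸ one_ne_zero)
  have hterm : ∀ m n : ℤ, x.coeff m * z (n - m) * w ^ n
      = x.coeff m * w ^ m * (z (n - m) * w ^ (n - m)) := fun m n => by
    rw [zpow_sub₀ hw0]; field_simp
  have hsum : ∀ m ∈ x.coeff.support,
      Summable fun n => x.coeff m * w ^ m * (z (n - m) * w ^ (n - m)) := fun m _ =>
    ((summable_mul_zpow hw hz).comp_injective (Equiv.subRight m).injective).mul_left _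
  calc fourierAt w (ellOneConv x z)
      = ∑' n, ∑ m ∈ x.coeff.support, x.coeff m * w ^ m * (z (n - m) * w ^ (n - m)) := by
        simp only [fourierAt, ellOneConv_apply, Finset.sum_mul, hterm]
    _ = ∑ m ∈ x.coeff.support, x.coeff m * w ^ m * fourierAt w z := by
        rw [Summable.tsum_finsetSum hsum]
        simp only [tsum_mul_left, tsum_comp_sub_int fun n => z n * w ^ n, fourierAt]
    _ = fourierAt w x.coeff * fourierAt w z := by rw [fourierAt_coeff, Finset.sum_mul]

lemma fourierAt_coeff_pow (x : AddMonoidAlgebra ℂ ℤ) (k : ℕ) :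
    fourierAt w (x ^ k).coeff = fourierAt w x.coeff ^ k := by
  induction k with
  | zero =>
    rw [pow_zero, pow_zero, AddMonoidAlgebra.one_def, fourierAt_coeff,
      AddMonoidAlgebra.coeff_single, Finsupp.support_single _ one_ne_zero]
    simp
  | succ k ih =>
    rw [pow_succ', ← ellOneConv_coeff, fourierAt_ellOneConv hw x (summable_norm_coeff _), ih,
      pow_succ']

lemma norm_fourierAt_sub_le_tsum_norm_ellOneConv_sub (x y : AddMonoidAlgebra ℂ ℤ)
    (hz : Summable fun n => ‖z n‖) (hz1 : ∑' n, ‖z n‖ ≤ 1) :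
    ‖fourierAt w y.coeff‖ - ‖fourierAt w x.coeff‖ ≤ ∑' n, ‖ellOneConv x z n - y.coeff n‖ := by
  have hzy : Summable fun n => ‖(ellOneConv x z - y.coeff) n‖ :=
    summable_norm_iff.2 <| (summable_norm_iff.1 (summable_norm_ellOneConv hz)).sub
      (summable_norm_iff.1 (summable_norm_coeff y))
  have hFz : ‖fourierAt w z‖ ≤ 1 := (norm_fourierAt_le hw hz).trans hz1
  calc ‖fourierAt w y.coeff‖ - ‖fourierAt w x.coeff‖
      ≤ ‖fourierAt w y.coeff‖ - ‖fourierAt w x.coeff * fourierAt w z‖ := by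
        rw [norm_mul]; gcongr; exact mul_le_of_le_one_right (norm_nonneg _) hFz
    _ ≤ ‖fourierAt w x.coeff * fourierAt w z - fourierAt w y.coeff‖ :=
        (norm_sub_norm_le _ _).trans_eq (norm_sub_rev _ _)
    _ = ‖fourierAt w (ellOneConv x z - y.coeff)‖ := by
        rw [fourierAt_sub hw (summable_norm_ellOneConv hz) (summable_norm_coeff y),
          fourierAt_ellOneConv hw x hz]
    _ ≤ ∑' n, ‖ellOneConv x z n - y.coeff n‖ := norm_fourierAt_le hw hzy

end UnitCircle

section Generator

lemma coeff_ellOneG_of_ne {n : ℤ} (h1 : n ≠ 1) (h2 : n ≠ -1) : ellOneG.coeff n = 0 := by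
  simp [ellOneG, h1.symm, h2.symm]

lemma tsum_coeff_ellOneG {α : Type*} [AddCommMonoid α] [TopologicalSpace α] (f : ℂ → ℤ → α)
    (hf : ∀ n, f 0 n = 0) : ∑' n, f (ellOneG.coeff n) n = f (1 / 2) 1 + f (1 / 2) (-1) := by
  rw [tsum_eq_sum (s := {1, -1}) fun n hn => by
    simp only [Finset.mem_insert, Finset.mem_singleton, not_or] at hn
    rw [coeff_ellOneG_of_ne hn.1 hn.2, hf]]
  rw [Finset.sum_pair (by norm_num)]
  simp [ellOneG]

lemma tsum_norm_coeff_ellOneG : ∑' n, ‖ellOneG.coeff n‖ = 1 := by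
  rw [tsum_coeff_ellOneG (fun c _ => ‖c‖) fun _ => norm_zero]
  norm_num

lemma fourierAt_exp_mul_I_coeff_ellOneG (t : ℝ) :
    fourierAt (Complex.exp (t * Complex.I)) ellOneG.coeff = Real.cos t := by
  rw [fourierAt, tsum_coeff_ellOneG (fun c n => c * _ ^ n) fun _ => zero_mul _, zpow_one,
    zpow_neg_one, ← Complex.exp_neg, Complex.ofReal_cos, Complex.cos]
  ring_nf

end Generator

lemma exists_cos_pow_two_pow_eq_half (j : ℕ) :
    ∃ t : ℝ, 0 ≤ Real.cos t ∧ Real.cos t ^ 2 ^ j = 1 / 2 := by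
  set c : ℝ := (1 / 2) ^ ((2 ^ j : ℕ) : ℝ)⁻¹
  have hc0 : 0 ≤ c := by positivity
  have hc1 : c ≤ 1 := Real.rpow_le_one (by norm_num) (by norm_num) (by positivity)
  refine ⟨Real.arccos c, ?_, ?_⟩ <;> rw [Real.cos_arccos (by linarith) hc1]
  · exact hc0
  · exact Real.rpow_inv_natCast_pow (by norm_num) (by positivity)

/-- With `x_i = g^{2^i}`:  for `i > j` and every `z ∈ ℓ¹(ℤ)` with `‖z‖₁ ≤ 1` one has
`‖x_i * z − x_j‖₁ ≥ 1/4`, while for `i ≤ j` there is `z` with `‖z‖₁ ≤ 1` and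
`x_i * z = x_j`.  Hence `φ(x,y) = inf_{‖z‖≤1} ‖xz − y‖` orders the sequence `(x_i)`,
witnessing the order property (instability) of the convolution algebra `ℓ¹(ℤ)`. -/
theorem ellOne_order_property :
    (∀ i j : ℕ, j < i → ∀ z : ℤ → ℂ, Summable (fun n => ‖z n‖) →
      (∑' n : ℤ, ‖z n‖) ≤ 1 →
      (1 / 4 : ℝ) ≤ ∑' n : ℤ, ‖ellOneConv (ellOneG ^ 2 ^ i) z n - (ellOneG ^ 2 ^ j).coeff n‖) ∧
    (∀ i j : ℕ, i ≤ j → ∃ z : ℤ → ℂ, Summable (fun n => ‖z n‖) ∧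
      (∑' n : ℤ, ‖z n‖) ≤ 1 ∧
      ∀ n : ℤ, ellOneConv (ellOneG ^ 2 ^ i) z n = (ellOneG ^ 2 ^ j).coeff n) := by
  constructor
  · intro i j hij z hz hz1
    obtain ⟨t, hcos0, hcosj⟩ := exists_cos_pow_two_pow_eq_half j
    have hw := Complex.norm_exp_ofReal_mul_I t
    have hval : ∀ k : ℕ,
        ‖fourierAt (Complex.exp (t * Complex.I)) (ellOneG ^ 2 ^ k).coeff‖ = Real.cos t ^ 2 ^ k :=
      fun k => by
        rw [fourierAt_coeff_pow hw, fourierAt_exp_mul_I_coeff_ellOneG, ← Complex.ofReal_pow,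
          Complex.norm_real, Real.norm_of_nonneg (by positivity)]
    have hcosi : Real.cos t ^ 2 ^ i ≤ 1 / 4 :=
      calc Real.cos t ^ 2 ^ i ≤ Real.cos t ^ 2 ^ (j + 1) :=
            pow_le_pow_of_le_one hcos0 (Real.cos_le_one t) (Nat.pow_le_pow_right two_pos hij)
        _ = 1 / 4 := by rw [pow_succ, pow_mul, hcosj]; norm_num
    have key := norm_fourierAt_sub_le_tsum_norm_ellOneConv_sub hw (ellOneG ^ 2 ^ i)
      (ellOneG ^ 2 ^ j) hz hz1
    rw [hval, hval, hcosj] at key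
    linarith
  · intro i j hij
    refine ⟨(ellOneG ^ (2 ^ j - 2 ^ i)).coeff, summable_norm_coeff _,
      tsum_norm_coeff_pow_le_one tsum_norm_coeff_ellOneG.le _, fun n => ?_⟩
    rw [ellOneConv_coeff, ← pow_add, Nat.add_sub_cancel' (Nat.pow_le_pow_right two_pos hij)]
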